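/- Let n ≥ 1 be an integer, p a prime, and C ∈ M_n(𝔽_p) with C ≠ 0. If p > 2 or C ≠ I_n, then d(C) ≤ (n−1)² + 1. -/

import Mathlib

/-- `d(C)`: the dimension over `𝔽_p` of `{Z ∈ M_n(𝔽_p) : CZ + ZC = 0}`. -/
noncomputable def dC (n p : ℕ) (C : Matrix (Fin n) (Fin n) (ZMod p)) : ℕ :=
  Module.finrank (ZMod p)
    ↥(LinearMap.ker (LinearMap.mulLeft (ZMod p) C + LinearMap.mulRight (ZMod p) C))

/-!
If `C` is not scalar, pick `w` with `w, Cw` independent and a row vector `v` with `v, vC`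
independent. Then `Z ↦ CZ + ZC` is injective on the `(2n - 2)`-dimensional space of matrices
`α vᵀ + w βᵀ` with `β` orthogonal to two suitable vectors, so its rank is at least `2n - 2`.
If `C = c • 1`, then `CZ + ZC = 2cZ`, and `2c ≠ 0` unless `p = 2` and `C = 1`.
-/

open Matrix Module

section Field

variable {F : Type*} [Field F] {m : Type*} [Fintype m]

theorem exists_dotProduct_eq_of_linearIndependent {ι : Type*} [Fintype ι] {u : ι → m → F}
    (hu : LinearIndependent F u) (c : ι → F) : ∃ x : m → F, ∀ i, u i ⬝ᵥ x = c i := by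
  have hrank : (Matrix.of u).rank = Fintype.card ι := hu.rank_matrix
  have htop : LinearMap.range (Matrix.of u).mulVecLin = ⊤ :=
    Submodule.eq_top_of_finrank_eq (by rw [finrank_fintype_fun_eq_card]; exact hrank)
  obtain ⟨x, hx⟩ := LinearMap.range_eq_top.mp htop c
  exact ⟨x, fun i => congrFun hx i⟩

theorem exists_linearIndependent_pair_mulVec [DecidableEq m] {C : Matrix m m F}
    (hC : ∀ c : F, C ≠ c • 1) : ∃ w : m → F, LinearIndependent F ![w, C *ᵥ w] := by
  by_contra! h
  obtain ⟨c, hc⟩ := C.mulVecLin.exists_eq_smul_id_of_forall_notLinearIndependent h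
  refine hC c (Matrix.toLin'.injective ?_)
  rw [Matrix.toLin'_apply', hc]
  ext
  simp

theorem card_le_finrank_ker_mulVecLin_add_card {ι : Type*} [Fintype ι] (A : Matrix ι m F) :
    Fintype.card m ≤ finrank F (LinearMap.ker A.mulVecLin) + Fintype.card ι := by
  have h₁ := LinearMap.finrank_range_add_finrank_ker A.mulVecLin
  have h₂ := Submodule.finrank_le (LinearMap.range A.mulVecLin)
  simp only [finrank_fintype_fun_eq_card] at h₁ h₂
  omega

theorem eq_zero_of_anticomm_vecMulVec_add_vecMulVec (C : Matrix m m F)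
    {v w x x' y α β : m → F}
    (hvx : v ⬝ᵥ x = 0) (hvCx : (v ᵥ* C) ⬝ᵥ x = 1) (hvx' : v ⬝ᵥ x' = 1)
    (hyw : y ⬝ᵥ w = 0) (hyCw : y ⬝ᵥ (C *ᵥ w) = 1) (hβx : β ⬝ᵥ x = 0) (hβx' : β ⬝ᵥ x' = 0)
    (h : C * (vecMulVec α v + vecMulVec w β) + (vecMulVec α v + vecMulVec w β) * C = 0) :
    α = 0 ∧ β = 0 := by
  simp only [mul_add, add_mul, mul_vecMulVec, vecMulVec_mul] at h
  set s := (β ᵥ* C) ⬝ᵥ x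
  have hα : α = -s • w := by
    have hx := congrArg (· *ᵥ x) h
    simp only [add_mulVec, vecMulVec_mulVec, op_smul_eq_smul, zero_mulVec, hvx, hβx, hvCx] at hx
    linear_combination (norm := module) hx
  have hβ : β = s • v := by
    have hy := congrArg (y ᵥ* ·) h
    simp only [vecMul_add, vecMul_vecMulVec, vecMul_zero, hα, mulVec_smul, dotProduct_smul, hyw,
      hyCw] at hy
    linear_combination (norm := module) hy
  have hs : s = 0 := by simpa [hβ, hvx'] using hβx'
  simp [hα, hβ, hs]

theorem finrank_ker_anticomm_add_le_of_linearIndependent (C : Matrix m m F) {v w : m → F}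
    (hv : LinearIndependent F ![v, v ᵥ* C]) (hw : LinearIndependent F ![w, C *ᵥ w]) :
    finrank F (LinearMap.ker (LinearMap.mulLeft F C + LinearMap.mulRight F C))
      + 2 * Fintype.card m ≤ Fintype.card m ^ 2 + 2 := by
  obtain ⟨x, hx⟩ := exists_dotProduct_eq_of_linearIndependent hv ![0, 1]
  obtain ⟨x', hx'⟩ := exists_dotProduct_eq_of_linearIndependent hv ![1, 0]
  obtain ⟨y, hy⟩ := exists_dotProduct_eq_of_linearIndependent hw ![0, 1]
  let H := LinearMap.ker (Matrix.of ![x, x']).mulVecLin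
  have hH : Fintype.card m ≤ finrank F H + 2 := card_le_finrank_ker_mulVecLin_add_card _
  let L := LinearMap.mulLeft F C + LinearMap.mulRight F C
  let φ : (m → F) × H →ₗ[F] Matrix m m F :=
    ((vecMulVecBilin F F).flip v).coprod (vecMulVecBilin F F w ∘ₗ H.subtype)
  have hφ : Function.Injective (L ∘ₗ φ) := by
    rw [← LinearMap.ker_eq_bot, LinearMap.ker_eq_bot']
    rintro ⟨α, β, hβ⟩ h
    have hβx : β ⬝ᵥ x = 0 := by rw [dotProduct_comm]; exact congrFun hβ 0
    have hβx' : β ⬝ᵥ x' = 0 := by rw [dotProduct_comm]; exact congrFun hβ 1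
    obtain ⟨rfl, rfl⟩ := eq_zero_of_anticomm_vecMulVec_add_vecMulVec C (hx 0) (hx 1) (hx' 0)
      (by simpa [dotProduct_comm] using hy 0) (by simpa [dotProduct_comm] using hy 1) hβx hβx' h
    rfl
  have h₁ := LinearMap.finrank_range_of_inj hφ
  have h₂ := Submodule.finrank_mono (LinearMap.range_comp_le_range φ L)
  have h₃ := LinearMap.finrank_range_add_finrank_ker L
  simp only [finrank_prod, finrank_matrix, finrank_fintype_fun_eq_card, finrank_self] at h₁ h₃
  nlinarith

theorem finrank_ker_anticomm_add_le [DecidableEq m] {C : Matrix m m F}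
    (hC : ∀ c : F, C ≠ c • 1) :
    finrank F (LinearMap.ker (LinearMap.mulLeft F C + LinearMap.mulRight F C))
      + 2 * Fintype.card m ≤ Fintype.card m ^ 2 + 2 := by
  obtain ⟨w, hw⟩ := exists_linearIndependent_pair_mulVec hC
  obtain ⟨v, hv⟩ := exists_linearIndependent_pair_mulVec (C := Cᵀ) fun c hc =>
    hC c (by simpa using congrArg transpose hc)
  rw [mulVec_transpose] at hv
  exact finrank_ker_anticomm_add_le_of_linearIndependent C hv hw

theorem ker_anticomm_smul_one_eq_bot [DecidableEq m] {c : F} (hc : c + c ≠ 0) :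
    LinearMap.ker (LinearMap.mulLeft F (c • 1 : Matrix m m F) + LinearMap.mulRight F (c • 1))
      = ⊥ := by
  rw [LinearMap.ker_eq_bot']
  intro Z hZ
  simp only [LinearMap.add_apply, LinearMap.mulLeft_apply, LinearMap.mulRight_apply,
    Matrix.smul_mul, Matrix.mul_smul, one_mul, mul_one, ← add_smul] at hZ
  exact (smul_eq_zero.mp hZ).resolve_left hc

end Field

theorem ZMod.add_self_ne_zero {p : ℕ} [hp : Fact p.Prime] {c : ZMod p} (hc : c ≠ 0)
    (h : 2 < p ∨ c ≠ 1) : c + c ≠ 0 := by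
  intro hcc
  have h2 : ((2 : ℕ) : ZMod p) = 0 := by
    rw [← two_mul] at hcc
    exact_mod_cast (mul_eq_zero.mp hcc).resolve_right hc
  rw [ZMod.natCast_eq_zero_iff, Nat.prime_dvd_prime_iff_eq hp.out Nat.prime_two] at h2
  subst h2
  rcases h with h | h
  · omega
  · exact h (by fin_cases c; exacts [(hc rfl).elim, rfl])

theorem dC_le (n p : ℕ) (hn : 1 ≤ n) (hp : p.Prime)
    (C : Matrix (Fin n) (Fin n) (ZMod p)) (hC : C ≠ 0) (h : 2 < p ∨ C ≠ 1) :
    dC n p C ≤ (n - 1) ^ 2 + 1 := by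
  have : Fact p.Prime := ⟨hp⟩
  by_cases hs : ∃ c : ZMod p, C = c • 1
  · obtain ⟨c, rfl⟩ := hs
    have hc : c ≠ 0 := by rintro rfl; exact hC (zero_smul _ _)
    have hc1 : 2 < p ∨ c ≠ 1 := h.imp_right fun h hc1 => h (by rw [hc1, one_smul])
    rw [dC, ker_anticomm_smul_one_eq_bot (ZMod.add_self_ne_zero hc hc1), finrank_bot]
    exact Nat.zero_le _
  · push Not at hs
    have hbound := finrank_ker_anticomm_add_le hs
    rw [Fintype.card_fin] at hbound
    obtain ⟨k, rfl⟩ := Nat.exists_eq_add_of_le' hn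
    unfold dC
    simp only [Nat.add_sub_cancel]
    nlinarith
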